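/- arXiv:2411.19883 — 10 statements merged into one kernel-verified Lean document; each statement's English description precedes it below -/
import Mathlib

section
/- Let K be an idempotent semifield (a commutative semiring in which every nonzero element has a multiplicative inverse and addition is idempotent, i.e., a + a = a for all a). Then the group of units K^× is torsion-free. -/
/-- A predicate for a monoid to be torsion-free (as in Mathlib of December 2024). -/
def Monoid.IsTorsionFree (G : Type*) [Monoid G] : Prop :=
  ∀ g : G, g ≠ 1 → ¬IsOfFinOrder g

/-!
If `x ^ n = 1` with `n > 0`, the geometric sum `s = 1 + x + ⋯ + x ^ (n - 1)` satisfies `x * s = s`.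
Idempotent addition makes the semiring zero-sum-free, so `s ≠ 0` because it has the summand `1`,
and cancelling `s` gives `x = 1`.
-/

open Finset

theorem eq_zero_of_add_eq_zero_of_idem {M : Type*} [AddMonoid M] (hidem : ∀ a : M, a + a = a)
    {a b : M} (h : b + a = 0) : a = 0 :=
  calc a = 0 + a := (zero_add a).symm
    _ = b + (a + a) := by rw [← h, add_assoc]
    _ = 0 := by rw [hidem, h]

section Semiring

variable {R : Type*} [Semiring R]

theorem mul_geom_sum_eq_self_of_pow_eq_one {x : R} {n : ℕ} (hx : x ^ n = 1) :
    x * ∑ i ∈ range n, x ^ i = ∑ i ∈ range n, x ^ i := by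
  cases n with
  | zero => simp
  | succ m =>
    calc x * ∑ i ∈ range (m + 1), x ^ i
        = ∑ i ∈ range (m + 1), x ^ (i + 1) := by simp only [mul_sum, pow_succ']
      _ = ∑ i ∈ range m, x ^ (i + 1) + x ^ (m + 1) := sum_range_succ _ _
      _ = ∑ i ∈ range (m + 1), x ^ i := by rw [hx, sum_range_succ', pow_zero]

theorem geom_sum_ne_zero_of_idem [Nontrivial R] (hidem : ∀ a : R, a + a = a) (x : R) {n : ℕ}
    (hn : n ≠ 0) : ∑ i ∈ range n, x ^ i ≠ 0 := by
  obtain ⟨m, rfl⟩ := Nat.exists_eq_succ_of_ne_zero hn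
  rw [sum_range_succ', pow_zero]
  exact fun h ↦ one_ne_zero (eq_zero_of_add_eq_zero_of_idem hidem h)

theorem eq_one_of_pow_eq_one_of_idem [Nontrivial R] [IsRightCancelMulZero R]
    (hidem : ∀ a : R, a + a = a) {x : R} {n : ℕ} (hn : n ≠ 0) (hx : x ^ n = 1) : x = 1 :=
  (mul_eq_right₀ (geom_sum_ne_zero_of_idem hidem x hn)).mp (mul_geom_sum_eq_self_of_pow_eq_one hx)

end Semiring

/-- The group of units of an idempotent semifield is torsion-free. -/
theorem units_torsionFree_of_idempotent_semifield
    (K : Type*) [Semifield K] (hidem : ∀ a : K, a + a = a) :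
    Monoid.IsTorsionFree Kˣ := by
  intro u hu hfin
  obtain ⟨n, hn, hun⟩ := hfin.exists_pow_eq_one
  refine hu (Units.ext (eq_one_of_pow_eq_one_of_idem hidem hn.ne' ?_))
  rw [← Units.val_pow_eq_pow_val, hun, Units.val_one]
end

section
/- Let K be a zero-sum-free semifield and G a group. The regular representation K[G] (viewed as a module over itself) is indecomposable: it cannot be written as a direct sum of two nonzero K[G]-submodules. -/
/-!
Write `1 = e + f` with `e ∈ p` and `f ∈ q`. Multiplying on the left by `e` gives a second
decomposition `e = e * e + e * f` of `e ∈ p`, so `e * f = 0`. Over a zero-sum-free `K` the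
coefficients of a product cannot cancel, so `K[G]` has no zero divisors and `e = 0` or `f = 0`.
Then `1` lies in one summand, which is therefore everything, and the other summand is `0`.
-/

open Function

theorem AddUnits.subsingleton_of_add_eq_zero {M : Type*} [AddCommMonoid M]
    (h : ∀ a b : M, a + b = 0 → a = 0 ∧ b = 0) : Subsingleton (AddUnits M) :=
  Subsingleton.addUnits_of_isAddUnit fun a ha ↦ by
    obtain ⟨b, hab, -⟩ := isAddUnit_iff_exists.mp ha
    exact (h a b hab).1

instance MonoidAlgebra.noZeroDivisors_of_subsingleton_addUnits {K G : Type*} [Semiring K]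
    [NoZeroDivisors K] [Subsingleton (AddUnits K)] [Mul G] : NoZeroDivisors (MonoidAlgebra K G) where
  eq_zero_or_eq_zero_of_mul_eq_zero {f g} hfg := by
    classical
    by_contra! hne
    obtain ⟨x, hx⟩ := Finsupp.support_nonempty_iff.mpr (coeff_eq_zero.not.mpr hne.1)
    obtain ⟨y, hy⟩ := Finsupp.support_nonempty_iff.mpr (coeff_eq_zero.not.mpr hne.2)
    have hxy : (f * g).coeff (x * y) = 0 := by rw [hfg, coeff_zero, Finsupp.zero_apply]
    rw [coeff_mul, Finsupp.sum, Finset.sum_eq_zero_iff] at hxy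
    have hterm := Finset.sum_eq_zero_iff.mp (hxy x hx) y hy
    simp only [if_pos] at hterm
    exact mul_ne_zero (Finsupp.mem_support_iff.mp hx) (Finsupp.mem_support_iff.mp hy) hterm

namespace Submodule

theorem eq_zero_of_mem_of_injective_coprod {R M : Type*} [Semiring R] [AddCommMonoid M]
    [Module R M] {p q : Submodule R M} (h : Injective (p.subtype.coprod q.subtype)) {a : M}
    (hp : a ∈ p) (hq : a ∈ q) : a = 0 := by
  have : ((⟨a, hp⟩, 0) : p × q) = (0, ⟨a, hq⟩) := h (by simp)
  simpa using congrArg (fun w : p × q ↦ (w.1 : M)) this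

theorem eq_bot_or_eq_bot_of_bijective_coprod {R : Type*} [Semiring R] [NoZeroDivisors R]
    {p q : Submodule R R} (h : Bijective (p.subtype.coprod q.subtype)) : p = ⊥ ∨ q = ⊥ := by
  obtain ⟨⟨⟨e, he⟩, ⟨f, hf⟩⟩, hw⟩ := h.2 1
  replace hw : e + f = 1 := hw
  have hef : e * f = 0 := by
    have : e • ((⟨e, he⟩, ⟨f, hf⟩) : p × q) = (⟨e, he⟩, 0) := h.1 (by simp [← mul_add, hw])
    exact congrArg (fun v : p × q ↦ (v.2 : R)) this
  rcases mul_eq_zero.mp hef with rfl | rfl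
  · obtain rfl : f = 1 := by simpa using hw
    refine .inl <| (Submodule.eq_bot_iff _).mpr fun a ha ↦ ?_
    have haq : a ∈ q := by simpa using q.smul_mem a hf
    exact eq_zero_of_mem_of_injective_coprod h.1 ha haq
  · obtain rfl : e = 1 := by simpa using hw
    refine .inr <| (Submodule.eq_bot_iff _).mpr fun a ha ↦ ?_
    have hap : a ∈ p := by simpa using p.smul_mem a he
    exact eq_zero_of_mem_of_injective_coprod h.1 hap ha

end Submodule

/-- The regular representation `K[G]` of a group `G` over a zero-sum-free
semifield `K`, viewed as a module over itself, is indecomposable: it is not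
the internal direct sum of two nonzero submodules (direct sum meaning every
element is uniquely the sum of an element of each). -/
theorem regular_representation_indecomposable
    (K G : Type*) [Semifield K] [Group G]
    (hzsf : ∀ a b : K, a + b = 0 → a = 0 ∧ b = 0) :
    ¬ ∃ p q : Submodule (MonoidAlgebra K G) (MonoidAlgebra K G),
        p ≠ ⊥ ∧ q ≠ ⊥ ∧
        ∀ x : MonoidAlgebra K G, ∃! w : p × q, (w.1 : MonoidAlgebra K G) + (w.2 : MonoidAlgebra K G) = x := by
  rintro ⟨p, q, hp, hq, huniq⟩
  have := AddUnits.subsingleton_of_add_eq_zero hzsf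
  have hbij : Bijective (p.subtype.coprod q.subtype) := (bijective_iff_existsUnique _).mpr huniq
  exact (Submodule.eq_bot_or_eq_bot_of_bijective_coprod hbij).elim hp hq
end

section
/- Let M be a finitely generated module over the Boolean semifield 𝔹 = {0,1} (with 1 + 1 = 1). Then there is an order-reversing bijection between M and its dual M^∨ = Hom_𝔹(M, 𝔹), given by sending m to the homomorphism whose kernel is {y ∈ M : y ≤ m}, where y ≤ m means y + m = m. -/
/-!
A homomorphism `φ : M → 𝔹` is determined by its kernel, since `𝔹` has only the values `0` and
`1`. Because `a + b = 0` forces `a = b = 0` in `𝔹`, the kernel is a submodule closed under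
going down in the natural order. When `M` is finitely generated, the sum of the generators
lying in the kernel is its largest element `m`, so the kernel is `{y | y ≤ m}`.
-/

section IdempotentMonoid

variable {M : Type*} [AddCommMonoid M]

theorem add_eq_right_trans {x a b : M} (hxa : x + a = a) (hab : a + b = b) : x + b = b := by
  rw [← hab, ← add_assoc, hxa]

theorem add_add_eq_right_iff (hM : ∀ x : M, x + x = x) {y z m : M} :
    y + z + m = m ↔ y + m = m ∧ z + m = m := by
  refine ⟨fun h => ⟨add_eq_right_trans ?_ h, add_eq_right_trans ?_ h⟩, fun ⟨hy, hz⟩ => ?_⟩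
  · rw [← add_assoc, hM]
  · rw [add_comm y z, ← add_assoc, hM]
  · rw [add_assoc, hz, hy]

end IdempotentMonoid

/-- Together with `Nontrivial B`, this pins a semiring down to the Boolean semifield `𝔹`. -/
class IsBooleanSemifield (B : Type*) [Semiring B] : Prop where
  eq_zero_or_eq_one : ∀ a : B, a = 0 ∨ a = 1
  one_add_one : (1 : B) + 1 = 1

namespace IsBooleanSemifield

variable {B : Type*} [CommSemiring B] [IsBooleanSemifield B]

theorem one_add (a : B) : 1 + a = 1 := by
  rcases eq_zero_or_eq_one a with rfl | rfl
  · exact add_zero 1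
  · exact one_add_one

theorem add_one (a : B) : a + 1 = 1 := by
  rw [add_comm, one_add]

theorem add_eq_zero_iff [Nontrivial B] {a b : B} : a + b = 0 ↔ a = 0 ∧ b = 0 := by
  refine ⟨fun h => ?_, fun ⟨ha, hb⟩ => by rw [ha, hb, add_zero]⟩
  rcases eq_zero_or_eq_one a with rfl | rfl
  · exact ⟨rfl, by rwa [zero_add] at h⟩
  · exact absurd h (by rw [one_add]; exact one_ne_zero)

theorem add_self (B : Type*) {M : Type*} [CommSemiring B] [IsBooleanSemifield B]
    [AddCommMonoid M] [Module B M] (x : M) : x + x = x := by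
  rw [← one_smul B x, ← add_smul, one_add_one]

variable {M : Type*} [AddCommMonoid M] [Module B M]

open Classical in
noncomputable def downsetDual (m : M) : M →ₗ[B] B where
  toFun y := if y + m = m then 0 else 1
  map_add' y z := by
    by_cases hy : y + m = m <;> by_cases hz : z + m = m <;>
      simp [hy, hz, add_add_eq_right_iff (add_self B), add_one]
  map_smul' c y := by
    rcases eq_zero_or_eq_one c with rfl | rfl <;> simp

theorem downsetDual_apply_of_not {m y : M} (h : ¬y + m = m) : downsetDual (B := B) m y = 1 :=
  if_neg h

variable [Nontrivial B]

theorem downsetDual_apply_eq_zero_iff {m y : M} : downsetDual (B := B) m y = 0 ↔ y + m = m := by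
  by_cases h : y + m = m
  · exact iff_of_true (if_pos h) h
  · rw [downsetDual_apply_of_not h]
    exact iff_of_false one_ne_zero h

theorem downsetDual_injective : Function.Injective (downsetDual (B := B) (M := M)) := by
  intro a b hab
  have mem_self (m : M) : downsetDual (B := B) m m = 0 :=
    downsetDual_apply_eq_zero_iff.mpr (add_self B m)
  have hba : b + a = a := downsetDual_apply_eq_zero_iff.mp (hab ▸ mem_self b)
  have hab' : a + b = b := downsetDual_apply_eq_zero_iff.mp (hab ▸ mem_self a)
  rw [← hba, add_comm, hab']

theorem eq_downsetDual_of_ker {φ : M →ₗ[B] B} {m : M} (hm : φ m = 0)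
    (hker : ∀ y, φ y = 0 → y + m = m) : φ = downsetDual m := by
  ext y
  by_cases h : y + m = m
  · rw [downsetDual_apply_eq_zero_iff.mpr h, ← add_zero (φ y), ← hm, ← map_add, h, hm]
  · rw [downsetDual_apply_of_not h]
    exact (eq_zero_or_eq_one (φ y)).resolve_left fun hy => h (hker y hy)

theorem exists_greatest_mem_ker [Module.Finite B M] (φ : M →ₗ[B] B) :
    ∃ m : M, φ m = 0 ∧ ∀ y, φ y = 0 → y + m = m := by
  classical
  obtain ⟨S, hS⟩ := Module.Finite.fg_top (R := B) (M := M)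
  refine ⟨∑ s ∈ S.filter (φ · = 0), s, ?_, fun y hy => ?_⟩
  · rw [map_sum]
    exact Finset.sum_eq_zero fun s hs => (Finset.mem_filter.mp hs).2
  have hyS : y ∈ Submodule.span B (S : Set M) := hS ▸ Submodule.mem_top
  induction hyS using Submodule.span_induction with
  | mem x hx =>
    rw [← Finset.add_sum_erase _ _ (Finset.mem_filter.mpr ⟨hx, hy⟩), ← add_assoc, add_self B]
  | zero => exact zero_add _
  | add x z _ _ ihx ihz =>
    obtain ⟨hx, hz⟩ := add_eq_zero_iff.mp ((map_add φ x z).symm.trans hy)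
    exact (add_add_eq_right_iff (add_self B)).mpr ⟨ihx hx, ihz hz⟩
  | smul c x _ ih =>
    rcases eq_zero_or_eq_one c with rfl | rfl
    · rw [zero_smul, zero_add]
    · rw [one_smul] at hy ⊢
      exact ih hy

theorem downsetDual_surjective [Module.Finite B M] :
    Function.Surjective (downsetDual (B := B) (M := M)) := fun φ =>
  let ⟨m, hm, hker⟩ := exists_greatest_mem_ker φ
  ⟨m, (eq_downsetDual_of_ker hm hker).symm⟩

theorem add_eq_right_iff_downsetDual_le {a b : M} :
    a + b = b ↔ ∀ x, downsetDual (B := B) b x + downsetDual a x = downsetDual a x := by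
  refine ⟨fun hab x => ?_, fun h => ?_⟩
  · by_cases hx : x + a = a
    · rw [downsetDual_apply_eq_zero_iff.mpr (add_eq_right_trans hx hab),
        downsetDual_apply_eq_zero_iff.mpr hx, add_zero]
    · rw [downsetDual_apply_of_not hx, add_one]
  · have := h a
    rw [downsetDual_apply_eq_zero_iff.mpr (add_self B a), add_zero] at this
    exact downsetDual_apply_eq_zero_iff.mp this

end IsBooleanSemifield

open IsBooleanSemifield in
/-- For a finitely generated module `M` over the Boolean semifield
`𝔹 = {0,1}` (here an arbitrary two-element idempotent semiring `B`), there is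
an order-reversing bijection `M ≃ Hom_𝔹(M,𝔹)` sending `m` to the homomorphism
whose kernel is `{y | y ≤ m}`, where `y ≤ m` means `y + m = m`. -/
theorem boolean_dual_order_reversing_bijection
    (B M : Type*) [CommSemiring B]
    (htwo : ∀ a : B, a = 0 ∨ a = 1) (hidem : (1 : B) + 1 = 1) (hne : (0 : B) ≠ 1)
    [AddCommMonoid M] [Module B M] [Module.Finite B M] :
    ∃ f : M ≃ (M →ₗ[B] B),
      (∀ m y : M, f m y = 0 ↔ y + m = m) ∧
      (∀ a b : M, a + b = b ↔ ∀ x : M, f b x + f a x = f a x) := by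
  have : IsBooleanSemifield B := ⟨htwo, hidem⟩
  have : Nontrivial B := ⟨⟨0, 1, hne⟩⟩
  exact ⟨Equiv.ofBijective downsetDual ⟨downsetDual_injective, downsetDual_surjective⟩,
    fun _ _ => downsetDual_apply_eq_zero_iff, fun _ _ => add_eq_right_iff_downsetDual_le⟩
end

section
/- Let G be a finite group and M a nonzero cyclic 𝔹[G]-module generated by v, with stabilizer H = {g ∈ G : g·v = v}. Then the set {g·v : gH ∈ G/H} (one element per left coset) is a quasi-basis of M as a 𝔹-module: it generates M, and any relation g·v = Σ_k a_k (k·v) (sum over coset representatives, a_k ∈ 𝔹) forces a_k = 0 for kH ≠ gH and a_g = 1. In particular M is quasi-free as a 𝔹-module. -/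
/-!
Over `𝔹`, `x ≤ y :↔ x + y = y` is a partial order on `M` preserved by the action of `G`.
If `k • v ≤ g • v`, then `a • v ≤ v` for `a = g⁻¹ * k`, hence `a ^ n • v ≤ v` for every `n`; taking
`a ^ n = a⁻¹` (possible as `a` has finite order) and translating by `a` gives `v ≤ a • v`, so
`k • v = g • v`. Every summand of a relation `g • v = ∑ k ∈ T, k • v` lies below `g • v`, so all
of `T` represents the coset `g H`, and `T` is nonempty because `v ≠ 0`.
-/

section Idempotent

variable {G M : Type*} [AddCommMonoid M]

theorem add_sum_eq_sum_of_mem (hidem : ∀ x : M, x + x = x) {ι : Type*} {T : Finset ι} {k : ι} (hk : k ∈ T) (f : ι → M) :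
    f k + ∑ i ∈ T, f i = ∑ i ∈ T, f i := by
  classical
  rw [← Finset.add_sum_erase T f hk, ← add_assoc, hidem]

variable [Monoid G] [DistribMulAction G M]

theorem pow_smul_add_eq_of_smul_add_eq (hidem : ∀ x : M, x + x = x) {a : G} {v : M} (h : a • v + v = v) (n : ℕ) :
    a ^ n • v + v = v := by
  induction n with
  | zero => rw [pow_zero, one_smul, hidem]
  | succ n ih =>
    have step : a ^ (n + 1) • v + a ^ n • v = a ^ n • v := by
      rw [pow_succ, mul_smul, ← smul_add, h]
    calc a ^ (n + 1) • v + v = a ^ (n + 1) • v + (a ^ n • v + v) := by rw [ih]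
      _ = v := by rw [← add_assoc, step, ih]

theorem smul_eq_of_smul_add_eq (hidem : ∀ x : M, x + x = x) {a : G} (ha : IsOfFinOrder a) {v : M} (h : a • v + v = v) :
    a • v = v := by
  obtain ⟨n, hn, han⟩ := isOfFinOrder_iff_pow_eq_one.mp ha
  have hle : v + a • v = a • v := by
    have := congrArg (a • ·) (pow_smul_add_eq_of_smul_add_eq hidem h (n - 1))
    simpa only [smul_add, smul_smul, ← pow_succ', Nat.sub_add_cancel hn, han, one_smul] using this
  rw [← hle, add_comm, h]

end Idempotent

theorem smul_eq_smul_of_inv_mul_mem_stabilizer {G α : Type*} [Group G] [MulAction G α] {g s : G}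
    {v : α} (h : s⁻¹ * g ∈ MulAction.stabilizer G v) : g • v = s • v := by
  rw [MulAction.mem_stabilizer_iff, mul_smul, inv_smul_eq_iff] at h
  exact h

theorem inv_mul_mem_stabilizer_of_smul_add_eq {G M : Type*} [Group G] [Finite G]
    [AddCommMonoid M] (hidem : ∀ x : M, x + x = x) [DistribMulAction G M] {g k : G} {v : M}
    (h : k • v + g • v = g • v) : g⁻¹ * k ∈ MulAction.stabilizer G v := by
  refine smul_eq_of_smul_add_eq hidem (isOfFinOrder_of_finite _) ?_
  simpa only [smul_add, mul_smul, inv_smul_smul] using congrArg (g⁻¹ • ·) h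

/-- A nonzero cyclic `𝔹[G]`-module (for `G` a finite group) is quasi-free as
a `𝔹`-module: given a generator `v` with stabilizer `H` and a set `S` of left
coset representatives for `H`, the family `{s • v | s ∈ S}` generates `M`,
and any relation `g • v = ∑_{k ∈ T} k • v` with `T ⊆ S` and `g ∈ S` forces
`T = {g}` (i.e. the coefficients are `δ`'s).  Over `𝔹` a linear combination
is exactly a sum over a subset, so this is quasi-independence. -/
theorem cyclic_boolean_group_module_quasiFree
    (G M : Type*) [Group G] [Fintype G] [AddCommMonoid M]
    (hidem : ∀ x : M, x + x = x) [DistribMulAction G M]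
    (v : M) (hv : v ≠ 0)
    (hgen : ∀ x : M, x ∈ AddSubmonoid.closure (Set.range fun g : G => g • v))
    (S : Finset G)
    (hS : ∀ g : G, ∃! s, s ∈ S ∧ s⁻¹ * g ∈ MulAction.stabilizer G v) :
    (∀ x : M, x ∈ AddSubmonoid.closure ((fun g : G => g • v) '' ↑S)) ∧
    (∀ g ∈ S, ∀ T ⊆ S, g • v = ∑ k ∈ T, k • v → T = {g}) := by
  refine ⟨fun x => AddSubmonoid.closure_mono ?_ (hgen x), fun g hg T hT hsum => ?_⟩
  · rintro _ ⟨g, rfl⟩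
    obtain ⟨s, ⟨hsS, hs⟩, -⟩ := hS g
    exact ⟨s, hsS, (smul_eq_smul_of_inv_mul_mem_stabilizer hs).symm⟩
  have hT_ne : T.Nonempty := by
    rw [Finset.nonempty_iff_ne_empty]
    rintro rfl
    exact hv ((smul_eq_zero_iff_eq g).mp (by rwa [Finset.sum_empty] at hsum))
  refine Finset.eq_singleton_iff_nonempty_unique_mem.mpr ⟨hT_ne, fun k hk => ?_⟩
  have hstab : g⁻¹ * k ∈ MulAction.stabilizer G v :=
    inv_mul_mem_stabilizer_of_smul_add_eq hidem (by rw [hsum]; exact add_sum_eq_sum_of_mem hidem hk (· • v))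
  obtain ⟨s, -, huniq⟩ := hS k
  rw [huniq k ⟨hT hk, by simp⟩, huniq g ⟨hg, hstab⟩]
end

section
/- Let G be a torsion group acting on a 𝔹-module M, and suppose M is generated as a 𝔹[G]-module by n elements. Then the poset of join-irreducible elements of M contains no chain of length greater than n (i.e., no chain with more than n elements). -/
/-! A join-irreducible element of the closure of a set lies in the set, so every `c j` has the
form `g • x i`. With `n + 1` chain elements and `n` generators, two comparable ones, `c j < c k`,
lie in one orbit: `c j = s • c k`. But if `s` has finite order, `s • b ≤ b` forces
`s • b = b`: iterating gives `s⁻¹ • b = s ^ (m - 1) • b ≤ b`, i.e. `b ≤ s • b`. -/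

def IsJoinIrreducible {M : Type*} [AddCommMonoid M] (v : M) : Prop :=
  v ≠ 0 ∧ ∀ a b : M, v = a + b → v = a ∨ v = b

theorem IsJoinIrreducible.mem_of_mem_closure {M : Type*} [AddCommMonoid M] {S : Set M} {v : M}
    (hv : IsJoinIrreducible v) (hmem : v ∈ AddSubmonoid.closure S) : v ∈ S := by
  suffices ∀ m ∈ AddSubmonoid.closure S, v = m → v ∈ S from this v hmem rfl
  intro m hm
  induction hm using AddSubmonoid.closure_induction with
  | mem y hy => rintro rfl; exact hy
  | zero => exact fun h => absurd h hv.1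
  | add a b _ _ iha ihb => exact fun h => (hv.2 a b h).elim iha ihb

section FinOrderSMul

variable {G M : Type*} [Monoid G] [AddCommMonoid M] [DistribMulAction G M] {s : G} {b : M}

theorem pow_succ_smul_add_self_eq_self (h : s • b + b = b) (t : ℕ) :
    s ^ (t + 1) • b + b = b := by
  induction t with
  | zero => simpa using h
  | succ t ih =>
    have hstep : s ^ (t + 2) • b + s ^ (t + 1) • b = s ^ (t + 1) • b := by
      rw [pow_succ, mul_smul, ← smul_add, h]
    calc s ^ (t + 2) • b + b = s ^ (t + 2) • b + (s ^ (t + 1) • b + b) := by rw [ih]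
      _ = s ^ (t + 1) • b + b := by rw [← add_assoc, hstep]
      _ = b := ih

theorem IsOfFinOrder.smul_eq_self_of_smul_add_self_eq (hs : IsOfFinOrder s)
    (h : s • b + b = b) : s • b = b := by
  obtain ⟨k, hk⟩ : ∃ k, orderOf s = k + 1 :=
    ⟨orderOf s - 1, (Nat.succ_pred_eq_of_pos hs.orderOf_pos).symm⟩
  have hpow : s ^ (2 * k + 2) = 1 := by
    rw [show 2 * k + 2 = (k + 1) * 2 by ring, pow_mul, ← hk, pow_orderOf_eq_one, one_pow]
  -- `s ^ (2k+1)` plays the role of `s⁻¹` (exponent `2k+1` rather than `k` avoids the case `k = 0`)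
  have hle : b + s • b = s • b := by
    have := congrArg (s • ·) (pow_succ_smul_add_self_eq_self h (2 * k))
    simpa only [smul_add, smul_smul, ← pow_succ', hpow, one_smul] using this
  rw [← hle, add_comm, h]

end FinOrderSMul

theorem no_long_chain_of_joinIrreducible_general
    (G M : Type*) [Group G] [AddCommMonoid M]
    [DistribMulAction G M] (htor : ∀ g : G, IsOfFinOrder g)
    (n : ℕ) (x : Fin n → M)
    (hgen : ∀ m : M,
      m ∈ AddSubmonoid.closure {y : M | ∃ (g : G) (i : Fin n), y = g • x i})
    (c : Fin (n + 1) → M)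
    (hirr : ∀ i, c i ≠ 0 ∧ ∀ a b : M, c i = a + b → c i = a ∨ c i = b)
    (hchain : ∀ i j : Fin (n + 1), i < j → c i + c j = c j ∧ c i ≠ c j) :
    False := by
  have hrep : ∀ j, ∃ (g : G) (i : Fin n), c j = g • x i := fun j =>
    IsJoinIrreducible.mem_of_mem_closure (v := c j) (hirr j) (hgen (c j))
  choose g i hgi using hrep
  have hdistinct : ∀ j k, j < k → i j ≠ i k := by
    intro j k hjk hi
    obtain ⟨hle, hne⟩ := hchain j k hjk
    have hjk_orbit : (g j * (g k)⁻¹) • c k = c j := by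
      rw [hgi j, hgi k, mul_smul, inv_smul_smul, hi]
    rw [← hjk_orbit] at hle hne
    exact hne ((htor _).smul_eq_self_of_smul_add_self_eq hle)
  obtain ⟨j, k, hne, hi⟩ := Fintype.exists_ne_map_eq_of_card_lt i (by simp)
  rcases hne.lt_or_gt with hjk | hkj
  · exact hdistinct j k hjk hi
  · exact hdistinct k j hkj hi.symm

/-- If a torsion group `G` acts on a module `M` over the Boolean semifield
(an idempotent commutative monoid) and `M` is generated as a `𝔹[G]`-module by
`n` elements, then the poset of join-irreducible elements of `M` (with
`x ≤ y ↔ x + y = y`) contains no chain with more than `n` elements. -/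
theorem no_long_chain_of_joinIrreducible
    (G M : Type*) [Group G] [AddCommMonoid M] (hidem : ∀ x : M, x + x = x)
    [DistribMulAction G M] (htor : ∀ g : G, IsOfFinOrder g)
    (n : ℕ) (x : Fin n → M)
    (hgen : ∀ m : M,
      m ∈ AddSubmonoid.closure {y : M | ∃ (g : G) (i : Fin n), y = g • x i})
    (c : Fin (n + 1) → M)
    (hirr : ∀ i, c i ≠ 0 ∧ ∀ a b : M, c i = a + b → c i = a ∨ c i = b)
    (hchain : ∀ i j : Fin (n + 1), i < j → c i + c j = c j ∧ c i ≠ c j) :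
    False :=
  no_long_chain_of_joinIrreducible_general G M htor n x hgen c hirr hchain
end

section
/- Let G be a group and K a zero-sum-free semifield, and let V = K^n be a representation of G. Then V is indecomposable as a representation if and only if G acts transitively on the set of basis lines of V. -/
/-!
Over a zero-sum-free semifield (encoded as `Subsingleton (AddUnits K)`) a coordinate subspace
`span (b '' s)` contains every summand of each of its elements. Hence an invertible endomorphism
carries basis lines to basis lines, and when `V` is the direct sum of `p` and `q` every basis vector
lies in `p` or in `q`. If `G` is transitive on the lines, some `g` moves a basis vector of `p` onto
one of `q`, contradicting `p ⊓ q = ⊥`. Otherwise the lines of one orbit and the remaining lines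
span two invariant subspaces that split `V`.
-/

open Submodule

theorem Representation.exists_map_eq_iff_of_map_eq {k G V : Type*} [CommSemiring k] [Group G]
    [AddCommMonoid V] [Module k V] (ρ : Representation k G V) {p q r : Submodule k V} {g : G}
    (h : q.map (ρ g) = r) : (∃ g', p.map (ρ g') = q) ↔ ∃ g', p.map (ρ g') = r := by
  have map_mul (g₁ g₂ : G) (p : Submodule k V) :
      p.map (ρ (g₁ * g₂)) = (p.map (ρ g₂)).map (ρ g₁) := by
    rw [map_mul, Module.End.mul_eq_comp, map_comp]
  constructor
  · rintro ⟨g', hg'⟩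
    exact ⟨g * g', by rw [map_mul, hg', h]⟩
  · rintro ⟨g', hg'⟩
    refine ⟨g⁻¹ * g', ?_⟩
    rw [map_mul, hg', ← h, ← map_mul, inv_mul_cancel, _root_.map_one, Module.End.one_eq_id,
      map_id]

theorem Submodule.isCompl_of_existsUnique_add {R M : Type*} [Semiring R] [AddCommMonoid M]
    [Module R M] {p q : Submodule R M} (h : ∀ z, ∃! w : p × q, (w.1 : M) + w.2 = z) :
    IsCompl p q := by
  refine ⟨disjoint_def.2 fun x hxp hxq => ?_, codisjoint_iff.2 (eq_top_iff.2 fun z _ => ?_)⟩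
  · exact congr_arg (fun w : p × q => (w.1 : M))
      ((h x).unique (y₁ := (⟨x, hxp⟩, 0)) (y₂ := (0, ⟨x, hxq⟩)) (by simp) (by simp))
  · obtain ⟨⟨u, v⟩, huv, -⟩ := h z
    exact mem_sup.2 ⟨u, u.2, v, v.2, huv⟩

namespace Module.Basis

variable {ι K M : Type*} [AddCommMonoid M]

section Semiring

variable [Semiring K] [Module K M] (b : Basis ι K M)

open Classical in
theorem repr_eq_filter_of_add_eq {s : Set ι} {u v z : M} (hu : u ∈ span K (b '' s))
    (hv : v ∈ span K (b '' sᶜ)) (huv : u + v = z) :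
    b.repr u = (b.repr z).filter (· ∈ s) := by
  rw [mem_span_image] at hu hv
  ext m
  by_cases hm : m ∈ s
  · have : b.repr v m = 0 := Finsupp.notMem_support_iff.1 fun h => hv h hm
    rw [Finsupp.filter_apply_pos _ _ hm, ← huv, map_add, Finsupp.add_apply, this, add_zero]
  · rw [Finsupp.filter_apply_neg _ _ hm]
    exact Finsupp.notMem_support_iff.1 fun h => hm (hu h)

theorem existsUnique_add_span_image_compl (s : Set ι) (z : M) :
    ∃! w : span K (b '' s) × span K (b '' sᶜ), (w.1 : M) + w.2 = z := by
  classical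
  have mem (t : Set ι) : b.repr.symm ((b.repr z).filter (· ∈ t)) ∈ span K (b '' t) := by
    rw [mem_span_image, LinearEquiv.apply_symm_apply, Finsupp.support_filter]
    exact fun m hm => (Finset.mem_filter.1 hm).2
  refine ⟨(⟨_, mem s⟩, ⟨_, mem sᶜ⟩), ?_, ?_⟩
  · simp only [Set.mem_compl_iff, ← map_add, Finsupp.filter_add_filter_not,
      LinearEquiv.symm_apply_apply]
  · rintro ⟨⟨u, hu⟩, ⟨v, hv⟩⟩ huv
    refine Prod.ext (Subtype.ext ?_) (Subtype.ext ?_) <;> apply b.repr.injective <;>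
      simp only [LinearEquiv.apply_symm_apply]
    · exact b.repr_eq_filter_of_add_eq hu hv huv
    · exact b.repr_eq_filter_of_add_eq hv (by rwa [compl_compl]) ((add_comm v u).trans huv)

variable [Subsingleton (AddUnits K)]

theorem mem_span_image_of_add_mem {s : Set ι} {u v : M} (h : u + v ∈ span K (b '' s)) :
    u ∈ span K (b '' s) := by
  rw [mem_span_image] at h ⊢
  intro m hm
  by_contra hms
  have huv : b.repr u m + b.repr v m = 0 := by
    simpa using Finsupp.notMem_support_iff.1 (mt (@h m) hms)
  exact Finsupp.mem_support_iff.1 hm (add_eq_zero.1 huv).1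

theorem mem_span_image_of_sum_mem {κ : Type*} {t : Finset κ} {y : κ → M} {s : Set ι}
    (h : ∑ k ∈ t, y k ∈ span K (b '' s)) {k : κ} (hk : k ∈ t) :
    y k ∈ span K (b '' s) := by
  classical
  rw [← Finset.add_sum_erase t y hk] at h
  exact b.mem_span_image_of_add_mem h

end Semiring

section DivisionSemiring

variable [DivisionSemiring K] [Module K M] [Subsingleton (AddUnits K)] (b : Basis ι K M)

theorem exists_map_span_singleton_eq_of_isUnit {f : Module.End K M} (hf : IsUnit f) (i : ι) :
    ∃ j, (K ∙ b i).map f = K ∙ b j := by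
  obtain ⟨g, hfg, hgf⟩ := isUnit_iff_exists.1 hf
  have inv_apply (x : M) : g (f x) = x := by
    rw [← Module.End.mul_apply, hgf, Module.End.one_apply]
  have apply_inv (x : M) : f (g x) = x := by
    rw [← Module.End.mul_apply, hfg, Module.End.one_apply]
  set v := b.repr (f (b i))
  obtain ⟨j, hj⟩ : ∃ j, v j ≠ 0 := by
    by_contra! hv
    have : f (b i) = 0 := b.repr.injective (by ext; simp [v, hv])
    exact b.ne_zero i (by rw [← inv_apply (b i), this, map_zero])
  -- `g (f (b i)) = b i`, so zero-sum-freeness puts every `g (b k)` with `v k ≠ 0` on that line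
  have hsum : ∑ k ∈ v.support, v k • g (b k) ∈ span K (b '' {i}) := by
    have expand : g (f (b i)) = ∑ k ∈ v.support, v k • g (b k) := by
      conv_lhs => rw [← b.linearCombination_repr (f (b i))]
      simp [v, Finsupp.linearCombination_apply, Finsupp.sum]
    rw [← expand, inv_apply]
    exact subset_span (Set.mem_image_of_mem b rfl)
  have hgj := b.mem_span_image_of_sum_mem hsum (Finsupp.mem_support_iff.2 hj)
  rw [Set.image_singleton, smul_mem_iff _ hj] at hgj
  obtain ⟨a, ha⟩ := mem_span_singleton.1 hgj
  have hbj : b j = a • f (b i) := by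
    rw [← map_smul, ha, apply_inv]
  have ha0 : a ≠ 0 := by
    rintro rfl
    exact b.ne_zero j (by simpa using hbj)
  refine ⟨j, ?_⟩
  rw [map_span, Set.image_singleton, hbj, span_singleton_smul_eq (Ne.isUnit ha0)]

theorem mapsTo_span_image_of_isUnit {f : Module.End K M} (hf : IsUnit f) {s : Set ι}
    (hs : ∀ i ∈ s, ∀ j, (K ∙ b i).map f = K ∙ b j → j ∈ s) :
    Set.MapsTo f (span K (b '' s)) (span K (b '' s)) := by
  suffices (span K (b '' s)).map f ≤ span K (b '' s) from fun x hx => this (mem_map_of_mem hx)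
  rw [map_span_le]
  rintro _ ⟨i, hi, rfl⟩
  obtain ⟨j, hj⟩ := b.exists_map_span_singleton_eq_of_isUnit hf i
  have hfi : f (b i) ∈ K ∙ b j := hj ▸ mem_map_of_mem (mem_span_singleton_self _)
  exact span_mono (Set.singleton_subset_iff.2 (Set.mem_image_of_mem b (hs i hi j hj))) hfi

theorem mem_or_mem_of_codisjoint {p q : Submodule K M} (h : Codisjoint p q) (i : ι) :
    b i ∈ p ∨ b i ∈ q := by
  obtain ⟨u, hu, v, hv, huv⟩ := mem_sup.1 (h.eq_top ▸ mem_top : b i ∈ p ⊔ q)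
  have hspan : u + v ∈ span K (b '' {i}) := huv ▸ subset_span (Set.mem_image_of_mem b rfl)
  obtain ⟨α, rfl⟩ :=
    mem_span_singleton.1 (Set.image_singleton ▸ b.mem_span_image_of_add_mem hspan)
  obtain ⟨β, rfl⟩ := mem_span_singleton.1
    (Set.image_singleton ▸ b.mem_span_image_of_add_mem (add_comm (α • b i) _ ▸ hspan))
  have hαβ : α + β = 1 := by simpa using congr(b.repr $huv i)
  by_cases hα : α = 0
  · rw [hα, zero_add] at hαβ
    exact .inr (by rwa [hαβ, one_smul] at hv)
  · exact .inl ((smul_mem_iff p hα).1 hu)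

theorem exists_mem_of_isCompl {p q : Submodule K M} (h : IsCompl p q) (hp : p ≠ ⊥) :
    ∃ i, b i ∈ p := by
  by_contra! hnot
  have hq : q = ⊤ := eq_top_iff.2 <| b.span_eq ▸ span_le.2 <| Set.range_subset_iff.2 fun i =>
    (b.mem_or_mem_of_codisjoint h.codisjoint i).resolve_left (hnot i)
  exact hp (disjoint_top.1 (hq ▸ h.disjoint))

end DivisionSemiring

end Module.Basis


/-- A representation `V = K^n` of a group `G` over a zero-sum-free semifield
`K` is indecomposable (not an internal direct sum of two nonzero invariant
submodules) if and only if `G` acts transitively on the set of basis lines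
(the lines spanned by the standard basis vectors, which over such a semiring
is the set of basis lines for any basis). -/
theorem indecomposable_iff_transitive_on_basis_lines
    (K G : Type*) [Semifield K] [Group G]
    (hzsf : ∀ a b : K, a + b = 0 → a = 0 ∧ b = 0)
    (n : ℕ) (ρ : Representation K G (Fin n → K)) :
    (¬ ∃ p q : Submodule K (Fin n → K),
        (∀ g : G, ∀ y ∈ p, ρ g y ∈ p) ∧ (∀ g : G, ∀ y ∈ q, ρ g y ∈ q) ∧
        p ≠ ⊥ ∧ q ≠ ⊥ ∧
        ∀ z : Fin n → K, ∃! w : p × q, (w.1 : Fin n → K) + (w.2 : Fin n → K) = z)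
      ↔ ∀ i j : Fin n, ∃ g : G,
          Submodule.map (ρ g) (Submodule.span K {Pi.single i (1 : K)}) =
            Submodule.span K {Pi.single j (1 : K)} := by
  have : Subsingleton (AddUnits K) :=
    ⟨fun u v => AddUnits.ext ((hzsf _ _ u.val_neg).1.trans (hzsf _ _ v.val_neg).1.symm)⟩
  simp only [← Pi.basisFun_apply K (Fin n)]
  set b := Pi.basisFun K (Fin n)
  constructor
  · intro hind i j
    by_contra hij
    set s := {m | ∃ g, (K ∙ b i).map (ρ g) = K ∙ b m}
    have ne_bot {t : Set (Fin n)} {m : Fin n} (hm : m ∈ t) : span K (b '' t) ≠ ⊥ :=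
      fun h => b.ne_zero m (span_eq_bot.1 h _ (Set.mem_image_of_mem b hm))
    have hρ (g : G) : IsUnit (ρ g) := (Group.isUnit g).map ρ
    exact hind ⟨span K (b '' s), span K (b '' sᶜ),
      fun g => b.mapsTo_span_image_of_isUnit (hρ g) fun m hm m' h =>
        (ρ.exists_map_eq_iff_of_map_eq h).1 hm,
      fun g => b.mapsTo_span_image_of_isUnit (hρ g) fun m hm m' h =>
        mt (ρ.exists_map_eq_iff_of_map_eq h).2 hm,
      ne_bot (⟨1, by rw [map_one, Module.End.one_eq_id, map_id]⟩ : i ∈ s), ne_bot hij,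
      b.existsUnique_add_span_image_compl s⟩
  · rintro htrans ⟨p, q, hp, -, hp0, hq0, hpq⟩
    have hpq := isCompl_of_existsUnique_add hpq
    obtain ⟨i, hi⟩ := b.exists_mem_of_isCompl hpq hp0
    obtain ⟨j, hj⟩ := b.exists_mem_of_isCompl hpq.symm hq0
    obtain ⟨g, hg⟩ := htrans i j
    obtain ⟨x, hx, hxj⟩ := mem_map.1 (hg ▸ mem_span_singleton_self (b j))
    have hjp : b j ∈ p := hxj ▸ hp g x ((span_singleton_le_iff_mem _ _).2 hi hx)
    exact b.ne_zero j (disjoint_def.1 hpq.disjoint _ hjp hj)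
end

section
/- Let K be a connected zero-sum-free semiring and V a finitely generated free K-module. Any K-module automorphism f of V induces a permutation σ_f of the set of basis lines of V, sending span(v) to span(f(v)) for each basis vector v, and the assignment f ↦ σ_f is a group homomorphism: σ_{fg} = σ_f ∘ σ_g. -/
/-!
Write `A`, `B` for the matrices of an automorphism and of its inverse. For a fixed column `i`,
the elements `e m = B i m * A m i` sum to `(B * A) i i = 1`, and they are pairwise orthogonal
because, by zero-sum-freeness, every term of an off-diagonal entry of `A * B = 1` vanishes.
Connectedness forces one of them, `e j`, to be `1`; then `A j i` is a unit and the rest of column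
`i` vanishes, so the automorphism maps the line of `Pi.single i 1` onto that of `Pi.single j 1`.
Distinct basis vectors span distinct lines, so these line maps are permutations, and
functoriality of the action on submodules makes `f ↦ σ_f` a homomorphism.
-/

open Function Matrix Submodule
open scoped Pointwise

theorem eq_zero_of_mem_of_sum_eq_zero {ι M : Type*} [AddCommMonoid M]
    (hzsf : ∀ a b : M, a + b = 0 → a = 0 ∧ b = 0) {s : Finset ι} {f : ι → M}
    (hsum : ∑ i ∈ s, f i = 0) {i : ι} (hi : i ∈ s) : f i = 0 := by
  classical
  exact (hzsf _ _ ((Finset.add_sum_erase s f hi).trans hsum)).1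

theorem exists_eq_one_of_sum_eq_one {ι K : Type*} [Fintype ι] [Semiring K] [Nontrivial K]
    (hconn : ∀ e f : K, e + f = 1 → e * f = 0 → e = 0 ∨ e = 1) {e : ι → K}
    (hsum : ∑ j, e j = 1) (horth : Pairwise fun j k => e j * e k = 0) : ∃ j, e j = 1 := by
  classical
  have hidem (j : ι) : e j = 0 ∨ e j = 1 := by
    refine hconn (e j) (∑ k ∈ Finset.univ.erase j, e k)
      (by rw [Finset.add_sum_erase _ _ (Finset.mem_univ j), hsum]) ?_
    rw [Finset.mul_sum]
    exact Finset.sum_eq_zero fun k hk => horth (Finset.ne_of_mem_erase hk).symm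
  by_contra! hne
  have hzero : ∑ j, e j = 0 := Finset.sum_eq_zero fun j _ => (hidem j).resolve_right (hne j)
  exact zero_ne_one (hzero.symm.trans hsum)

section Monomial

variable {ι K : Type*} [Fintype ι] [DecidableEq ι] [CommSemiring K] [Nontrivial K]

theorem Matrix.exists_col_eq_single_of_mul_eq_one
    (hzsf : ∀ a b : K, a + b = 0 → a = 0 ∧ b = 0)
    (hconn : ∀ e f : K, e + f = 1 → e * f = 0 → e = 0 ∨ e = 1)
    {A B : Matrix ι ι K} (hAB : A * B = 1) (hBA : B * A = 1) (i : ι) :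
    ∃ j, ∃ u : Kˣ, Aᵀ i = Pi.single j (u : K) := by
  have hoff {j k : ι} (hjk : j ≠ k) (m : ι) : A j m * B m k = 0 := by
    refine eq_zero_of_mem_of_sum_eq_zero hzsf (f := fun m => A j m * B m k) ?_ (Finset.mem_univ m)
    rw [← Matrix.mul_apply, hAB, Matrix.one_apply_ne hjk]
  obtain ⟨j, hj⟩ : ∃ j, B i j * A j i = 1 := by
    refine exists_eq_one_of_sum_eq_one hconn ?_ fun j k hjk => ?_
    · rw [← Matrix.mul_apply, hBA, Matrix.one_apply_eq]
    · calc B i j * A j i * (B i k * A k i) = B i j * A k i * (A j i * B i k) := by ring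
        _ = 0 := by rw [hoff hjk, mul_zero]
  refine ⟨j, (IsUnit.of_mul_eq_one_right _ hj).unit, funext fun k => ?_⟩
  rcases eq_or_ne k j with rfl | hkj
  · simp
  · rw [transpose_apply, Pi.single_eq_of_ne hkj]
    calc A k i = A k i * B i j * A j i := by rw [mul_assoc, hj, mul_one]
      _ = 0 := by rw [hoff hkj, zero_mul]

theorem LinearEquiv.exists_smul_span_single_one_eq
    (hzsf : ∀ a b : K, a + b = 0 → a = 0 ∧ b = 0)
    (hconn : ∀ e f : K, e + f = 1 → e * f = 0 → e = 0 ∨ e = 1)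
    (f : (ι → K) ≃ₗ[K] (ι → K)) (i : ι) :
    ∃ j, f • span K {(Pi.single i 1 : ι → K)} = span K {Pi.single j 1} := by
  have hAB : LinearMap.toMatrix' (f : (ι → K) →ₗ[K] ι → K) * LinearMap.toMatrix' f.symm = 1 := by
    rw [← LinearMap.toMatrix'_comp, LinearEquiv.comp_coe, f.symm_trans_self]
    exact LinearMap.toMatrix'_id
  have hBA : LinearMap.toMatrix' (f.symm : (ι → K) →ₗ[K] ι → K) * LinearMap.toMatrix' f = 1 := by
    rw [← LinearMap.toMatrix'_comp, LinearEquiv.comp_coe, f.self_trans_symm]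
    exact LinearMap.toMatrix'_id
  obtain ⟨j, u, hcol⟩ := Matrix.exists_col_eq_single_of_mul_eq_one hzsf hconn hAB hBA i
  have hfi : f (Pi.single i 1) = u • (Pi.single j 1 : ι → K) := by
    ext k
    simpa [LinearMap.toMatrix'_apply, Pi.single_apply, Units.smul_def] using congrFun hcol k
  refine ⟨j, ?_⟩
  rw [pointwise_smul_def, map_span, Set.image_singleton]
  exact (congrArg (fun v => span K {v}) hfi).trans (span_singleton_group_smul_eq K u _)

end Monomial

theorem span_single_one_injective {ι K : Type*} [DecidableEq ι] [Semiring K] [Nontrivial K] :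
    Injective fun i : ι => span K {Pi.single i (1 : K)} := by
  intro i j (h : span K {Pi.single i 1} = span K {Pi.single j 1})
  have hi : (Pi.single i 1 : ι → K) ∈ span K {Pi.single j 1} := by
    rw [← h]
    exact mem_span_singleton_self _
  obtain ⟨c, hc⟩ := mem_span_singleton.mp hi
  by_contra hij
  simpa [Pi.single_eq_of_ne hij] using congrFun hc i

theorem MulAction.exists_monoidHom_perm_of_injective {G X ι : Type*} [Group G] [MulAction G X]
    {L : ι → X} (hL : Injective L) (hmaps : ∀ (g : G) i, ∃ j, g • L i = L j) :
    ∃ σ : G →* Equiv.Perm ι, ∀ (g : G) i, g • L i = L (σ g i) := by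
  let S : SubMulAction G X :=
    { carrier := Set.range L
      smul_mem' := by rintro g _ ⟨i, rfl⟩; exact (hmaps g i).imp fun j hj => hj.symm }
  let e : ι ≃ S := Equiv.ofInjective L hL
  refine ⟨(e.symm.permCongrHom : Equiv.Perm S →* Equiv.Perm ι).comp (MulAction.toPermHom G S),
    fun g i => ?_⟩
  change g • L i = L (e.symm (g • e i))
  exact (Equiv.apply_ofInjective_symm hL (g • e i)).symm

/-- Over a connected zero-sum-free semiring `K`, every module automorphism of
a finitely generated free module permutes the set of basis lines, and the
assignment `f ↦ σ_f` is a group homomorphism. -/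
theorem automorphism_permutes_basis_lines
    (K : Type*) [CommSemiring K]
    (hzsf : ∀ a b : K, a + b = 0 → a = 0 ∧ b = 0)
    (hconn : ∀ e f : K, e + f = 1 → e * f = 0 → e = 0 ∨ e = 1)
    (n : ℕ) :
    ∃ σ : ((Fin n → K) ≃ₗ[K] (Fin n → K)) →* Equiv.Perm (Fin n),
      ∀ (f : (Fin n → K) ≃ₗ[K] (Fin n → K)) (i : Fin n),
        Submodule.map (f : (Fin n → K) →ₗ[K] (Fin n → K))
            (Submodule.span K {Pi.single i (1 : K)}) =
          Submodule.span K {Pi.single (σ f i) (1 : K)} := by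
  rcases subsingleton_or_nontrivial K with hK | hK
  · exact ⟨1, fun _ _ => Subsingleton.elim _ _⟩
  · exact MulAction.exists_monoidHom_perm_of_injective span_single_one_injective
      (LinearEquiv.exists_smul_span_single_one_eq hzsf hconn)
end

section
/- Let G be a finite group, K an idempotent semifield, and V an indecomposable representation of G over K with H ≤ G the stabilizer of a basis line span(v). Then H acts trivially on v (hv = v for all h ∈ H), and every element of V can be written uniquely as Σ_{g ∈ S} a_g (g·v), where S ⊆ G is a set of left coset representatives of H and a_g ∈ K. Equivalently, every element can be written uniquely as Σ_{g ∈ G} a_g (g·v) with coefficients constant on left cosets of H. -/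
/-!
Idempotent addition makes `K` zero-sum-free, so an invertible matrix over `K` has exactly one
nonzero entry in each column: every `ρ g` maps basis lines onto basis lines, which gives an action
`σ` of `G` on the indices. The coordinate subspaces of an orbit and of its complement are invariant
and complementary, so indecomposability makes the action transitive; the stabilizer of `i₀` is `H`.
An element of `H` scales `v` by some `c` with `c ^ |G| = 1`, and `c = 1` since the geometric sum
`1 + c + ⋯ + c ^ (|G| - 1)` is nonzero and fixed by multiplication with `c`. Hence `g • v` is a
nonzero multiple of `e (σ g i₀)` depending only on `gH`, and the coordinate of `x` at `σ g i₀`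
determines `a g`: the `|H|` equal contributions add up to a single one by idempotency.
-/

open Function

theorem subsingleton_addUnits_of_add_self {M : Type*} [AddMonoid M] (h : ∀ a : M, a + a = a) :
    Subsingleton (AddUnits M) :=
  Subsingleton.addUnits_of_isAddUnit fun a ⟨u, hu⟩ => by
    subst hu
    calc (u : M) = u + (u + ↑(-u)) := by rw [AddUnits.add_neg, add_zero]
      _ = u + ↑(-u) := by rw [← add_assoc, h]
      _ = 0 := AddUnits.add_neg u

theorem nsmul_eq_self_of_add_self {M : Type*} [AddMonoid M] (h : ∀ a : M, a + a = a)
    {n : ℕ} (hn : n ≠ 0) (a : M) : n • a = a := by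
  induction n with
  | zero => exact absurd rfl hn
  | succ n ih =>
    rcases eq_or_ne n 0 with rfl | hn'
    · exact one_nsmul a
    · rw [succ_nsmul, ih hn', h]

theorem eq_one_of_pow_eq_one_of_subsingleton_addUnits {K : Type*} [DivisionSemiring K]
    [Subsingleton (AddUnits K)] {c : K} {m : ℕ} (hm : m ≠ 0) (h : c ^ m = 1) : c = 1 := by
  obtain ⟨m, rfl⟩ := Nat.exists_eq_add_one_of_ne_zero hm
  set s := ∑ i ∈ Finset.range (m + 1), c ^ i
  have hcs : c * s = s := calc
    c * s = ∑ i ∈ Finset.range m, c ^ (i + 1) + c ^ (m + 1) := by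
      rw [Finset.mul_sum, Finset.sum_range_succ]
      simp only [← pow_succ']
    _ = s := by rw [h, ← pow_zero c, ← Finset.sum_range_succ']
  have hs : s ≠ 0 := fun hs => one_ne_zero (α := K) <| by
    simpa using (Finset.sum_eq_zero_iff.1 hs) 0 (Finset.mem_range.2 m.succ_pos)
  exact (mul_eq_right₀ hs).1 hcs

namespace Matrix

variable {K ι : Type*} [Semiring K] [Fintype ι] [DecidableEq ι] {M N : Matrix ι ι K}

theorem exists_ne_zero_of_mul_eq_one [Nontrivial K] (h : N * M = 1) (k : ι) : ∃ j, M j k ≠ 0 := by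
  by_contra! hk
  simpa [← mul_apply, h] using (Finset.sum_eq_zero fun j _ => by rw [hk j, mul_zero] :
    ∑ j, N k j * M j k = 0)

theorem eq_zero_of_mul_eq_one [NoZeroDivisors K] [Subsingleton (AddUnits K)] (h : N * M = 1)
    {j k l : ι} (hjk : M j k ≠ 0) (hlk : l ≠ k) : N l j = 0 := by
  have hsum : ∑ j, N l j * M j k = 0 := by rw [← mul_apply, h, one_apply_ne hlk]
  exact (mul_eq_zero.1 (Finset.sum_eq_zero_iff.1 hsum j (Finset.mem_univ j))).resolve_right hjk

theorem exists_col_eq_single_of_isUnit [Nontrivial K] [NoZeroDivisors K]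
    [Subsingleton (AddUnits K)] (hM : IsUnit M) (k : ι) : ∃ j, M j k ≠ 0 ∧ ∀ l ≠ j, M l k = 0 := by
  obtain ⟨u, rfl⟩ := hM
  obtain ⟨j, hj⟩ := exists_ne_zero_of_mul_eq_one u.inv_mul k
  refine ⟨j, hj, fun l hl => ?_⟩
  obtain ⟨k', hk'⟩ := exists_ne_zero_of_mul_eq_one u.mul_inv j
  obtain rfl : k' = k := by_contra fun hk => hk' (eq_zero_of_mul_eq_one u.inv_mul hj hk)
  exact eq_zero_of_mul_eq_one u.mul_inv hk' hl

end Matrix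

section BasisLines

variable {K ι : Type*} [Semifield K] [DecidableEq ι]

theorem Module.End.exists_apply_single_eq_of_isUnit [Fintype ι] [Subsingleton (AddUnits K)]
    {f : Module.End K (ι → K)} (hf : IsUnit f) (k : ι) :
    ∃ j, ∃ c ≠ 0, f (Pi.single k 1) = Pi.single j c := by
  obtain ⟨j, hj, hl⟩ := Matrix.exists_col_eq_single_of_isUnit (hf.map LinearMap.toMatrixAlgEquiv') k
  simp only [LinearMap.toMatrixAlgEquiv'_apply] at hj hl
  refine ⟨j, _, hj, funext fun l => ?_⟩
  rcases eq_or_ne l j with rfl | hlj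
  · rw [Pi.single_eq_same]
  · rw [hl l hlj, Pi.single_eq_of_ne hlj]

theorem span_single_one_inj {i j : ι} :
    (K ∙ (Pi.single i 1 : ι → K)) = K ∙ Pi.single j 1 ↔ i = j := by
  refine ⟨fun h => by_contra fun hij => ?_, fun h => h ▸ rfl⟩
  obtain ⟨a, ha⟩ := Submodule.mem_span_singleton.1 (h ▸ Submodule.mem_span_singleton_self _)
  simpa [Pi.single_eq_of_ne hij] using congrFun ha i

end BasisLines

section Supported

variable (K : Type*) {ι : Type*} [Semifield K]

def supportedIn (s : Set ι) : Submodule K (ι → K) :=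
  Submodule.pi sᶜ fun _ => ⊥

variable {K} {s : Set ι}

theorem mem_supportedIn {x : ι → K} : x ∈ supportedIn K s ↔ ∀ i ∉ s, x i = 0 := by
  simp [supportedIn, Submodule.mem_pi]

theorem existsUnique_add_mem_supportedIn (s : Set ι) (z : ι → K) :
    ∃! w : supportedIn K s × supportedIn K sᶜ, (w.1 : ι → K) + w.2 = z := by
  classical
  refine ⟨(⟨s.indicator z, mem_supportedIn.2 fun i hi => Set.indicator_of_notMem hi z⟩,
    ⟨sᶜ.indicator z, mem_supportedIn.2 fun i hi => Set.indicator_of_notMem hi z⟩),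
    s.indicator_self_add_compl z, ?_⟩
  rintro ⟨⟨x, hx⟩, ⟨y, hy⟩⟩ rfl
  rw [mem_supportedIn] at hx hy
  ext i <;> by_cases hi : i ∈ s <;> simp [hi, hx i, hy i]

variable [DecidableEq ι]

theorem span_single_le_supportedIn {i : ι} (hi : i ∈ s) :
    (K ∙ (Pi.single i 1 : ι → K)) ≤ supportedIn K s := by
  refine (Submodule.span_singleton_le_iff_mem _ _).2 (mem_supportedIn.2 fun j hj => ?_)
  exact Pi.single_eq_of_ne (ne_of_mem_of_not_mem hi hj).symm _

theorem supportedIn_ne_bot {i : ι} (hi : i ∈ s) : supportedIn K s ≠ ⊥ :=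
  (Submodule.ne_bot_iff _).2 ⟨_, span_single_le_supportedIn hi (Submodule.mem_span_singleton_self _),
    Pi.single_ne_zero_iff.2 one_ne_zero⟩

theorem map_mem_supportedIn [Fintype ι] {f : Module.End K (ι → K)}
    (hf : ∀ k ∈ s, f (Pi.single k 1) ∈ supportedIn K s) {y : ι → K} (hy : y ∈ supportedIn K s) :
    f y ∈ supportedIn K s := by
  rw [← Finset.univ_sum_single y, map_sum]
  refine Submodule.sum_mem _ fun k _ => ?_
  by_cases hk : k ∈ s
  · rw [← mul_one (y k), ← smul_eq_mul, Pi.single_smul', map_smul]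
    exact Submodule.smul_mem _ _ (hf k hk)
  · rw [mem_supportedIn.1 hy k hk, Pi.single_zero, map_zero]
    exact zero_mem _

end Supported

def Representation.IsDecomposable {K G V : Type*} [Semiring K] [Monoid G] [AddCommMonoid V]
    [Module K V] (ρ : Representation K G V) : Prop :=
  ∃ p q : Submodule K V, (∀ g : G, ∀ y ∈ p, ρ g y ∈ p) ∧ (∀ g : G, ∀ y ∈ q, ρ g y ∈ q) ∧
    p ≠ ⊥ ∧ q ≠ ⊥ ∧ ∀ z : V, ∃! w : p × q, (w.1 : V) + w.2 = z

theorem Representation.isDecomposable_of_supportedIn {K G ι : Type*} [Semifield K] [Monoid G]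
    [Fintype ι] [DecidableEq ι] {ρ : Representation K G (ι → K)} {s : Set ι}
    (hs : ∀ g, ∀ k ∈ s, ρ g (Pi.single k 1) ∈ supportedIn K s)
    (hsc : ∀ g, ∀ k ∉ s, ρ g (Pi.single k 1) ∈ supportedIn K sᶜ) {i j : ι} (hi : i ∈ s)
    (hj : j ∉ s) : ρ.IsDecomposable :=
  ⟨supportedIn K s, supportedIn K sᶜ, fun g _ => map_mem_supportedIn (hs g),
    fun g _ => map_mem_supportedIn (hsc g), supportedIn_ne_bot hi, supportedIn_ne_bot hj,
    existsUnique_add_mem_supportedIn s⟩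

section BasisLinePermutation

variable {K G ι : Type*} [Semifield K] [Group G] [DecidableEq ι]

def PermutesBasisLines (ρ : Representation K G (ι → K)) (σ : G → ι → ι) : Prop :=
  ∀ g k, (K ∙ (Pi.single k 1 : ι → K)).map (ρ g) = K ∙ Pi.single (σ g k) 1

theorem exists_permutesBasisLines [Fintype ι] [Subsingleton (AddUnits K)]
    (ρ : Representation K G (ι → K)) : ∃ σ, PermutesBasisLines ρ σ := by
  choose σ c hc hσ using fun g =>
    Module.End.exists_apply_single_eq_of_isUnit ((Group.isUnit g).map ρ)
  refine ⟨σ, fun g k => ?_⟩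
  rw [Submodule.map_span, Set.image_singleton, hσ, ← mul_one (c g k), ← smul_eq_mul,
    Pi.single_smul', Submodule.span_singleton_smul_eq (IsUnit.mk0 _ (hc g k))]

namespace PermutesBasisLines

variable {ρ : Representation K G (ι → K)} {σ : G → ι → ι}

theorem map_eq_iff (hσ : PermutesBasisLines ρ σ) (g : G) (k : ι) :
    (K ∙ (Pi.single k 1 : ι → K)).map (ρ g) = K ∙ Pi.single k 1 ↔ σ g k = k := by
  rw [hσ, span_single_one_inj]

theorem apply_single_mem (hσ : PermutesBasisLines ρ σ) (g : G) (k : ι) :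
    ρ g (Pi.single k 1) ∈ K ∙ Pi.single (σ g k) 1 :=
  hσ g k ▸ Submodule.mem_map_of_mem (Submodule.mem_span_singleton_self _)

theorem exists_apply_single_eq (hσ : PermutesBasisLines ρ σ) (g : G) (k : ι) :
    ∃ c ≠ 0, ρ g (Pi.single k 1) = Pi.single (σ g k) c := by
  obtain ⟨c, hc⟩ := Submodule.mem_span_singleton.1 (hσ.apply_single_mem g k)
  refine ⟨c, fun h0 => ?_, by rw [← hc, ← Pi.single_smul', smul_eq_mul, mul_one]⟩
  have := ρ.inv_self_apply g (Pi.single k 1)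
  rw [← hc, h0, zero_smul, map_zero] at this
  exact Pi.single_ne_zero_iff.2 one_ne_zero this.symm

theorem mul_apply (hσ : PermutesBasisLines ρ σ) (g g' : G) (k : ι) :
    σ (g * g') k = σ g (σ g' k) := by
  rw [← span_single_one_inj (K := K), ← hσ, map_mul, Module.End.mul_eq_comp, Submodule.map_comp,
    hσ, hσ]

theorem one_apply (hσ : PermutesBasisLines ρ σ) (k : ι) : σ 1 k = k := by
  rw [← hσ.map_eq_iff, map_one, Module.End.one_eq_id, Submodule.map_id]

theorem inv_apply_eq_iff (hσ : PermutesBasisLines ρ σ) (g : G) (j k : ι) :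
    σ g⁻¹ j = k ↔ j = σ g k := by
  constructor
  · rintro rfl
    rw [← hσ.mul_apply, mul_inv_cancel, hσ.one_apply]
  · rintro rfl
    rw [← hσ.mul_apply, inv_mul_cancel, hσ.one_apply]

theorem surjective_of_not_isDecomposable [Fintype ι] (hσ : PermutesBasisLines ρ σ)
    (hρ : ¬ ρ.IsDecomposable) (i : ι) : Surjective (σ · i) := by
  intro j
  by_contra! hj
  refine hρ (Representation.isDecomposable_of_supportedIn (s := Set.range (σ · i)) ?_ ?_
    ⟨1, hσ.one_apply i⟩ (by simpa using hj))
  · rintro g _ ⟨g', rfl⟩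
    refine span_single_le_supportedIn ?_ (hσ.apply_single_mem g _)
    exact ⟨g * g', hσ.mul_apply g g' i⟩
  · rintro g k hk
    refine span_single_le_supportedIn ?_ (hσ.apply_single_mem g k)
    rintro ⟨g', hg' : σ g' i = σ g k⟩
    exact hk ⟨g⁻¹ * g', show σ (g⁻¹ * g') i = k by rw [hσ.mul_apply, hg', hσ.inv_apply_eq_iff]⟩

end PermutesBasisLines

end BasisLinePermutation

theorem Representation.apply_eq_self_of_apply_mem_span_singleton {K G ι : Type*} [Semifield K]
    [Subsingleton (AddUnits K)] [Group G] [Fintype G] (ρ : Representation K G (ι → K)) {g : G}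
    {x : ι → K} (hx : x ≠ 0) (hgx : ρ g x ∈ K ∙ x) : ρ g x = x := by
  obtain ⟨c, hc⟩ := Submodule.mem_span_singleton.1 hgx
  have hpow : ∀ m : ℕ, ρ (g ^ m) x = c ^ m • x := by
    intro m
    induction m with
    | zero => simp
    | succ m ih =>
      rw [pow_succ', map_mul, Module.End.mul_apply, ih, map_smul, ← hc, smul_smul, ← pow_succ]
  obtain ⟨i, hi⟩ : ∃ i, x i ≠ 0 := by
    by_contra! h
    exact hx (funext h)
  have hcard : c ^ Fintype.card G = 1 := by
    have := congrFun (hpow (Fintype.card G)) i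
    rw [pow_card_eq_one, map_one, Module.End.one_apply, Pi.smul_apply, smul_eq_mul] at this
    exact (mul_eq_right₀ hi).1 this.symm
  rw [← hc, eq_one_of_pow_eq_one_of_subsingleton_addUnits Fintype.card_ne_zero hcard, one_smul]

section FiberwiseExpansion

variable {K α ι : Type*} [Semifield K] [Fintype α] [DecidableEq ι] {s : α → ι} {w : α → ι → K}

theorem sum_smul_apply_of_fiberwise_const (hidem : ∀ a : K, a + a = a)
    (hw : ∀ a, ∃ c, w a = Pi.single (s a) c) (hws : ∀ a b, s a = s b → w a = w b) {f : α → K}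
    (hf : ∀ a b, s a = s b → f a = f b) (b : α) :
    (∑ a, f a • w a) (s b) = f b * w b (s b) := by
  have hterm : ∀ a, (f a • w a) (s b) = if s a = s b then f b * w b (s b) else 0 := by
    intro a
    split_ifs with hab
    · rw [hf a b hab, hws a b hab, Pi.smul_apply, smul_eq_mul]
    · obtain ⟨c, hc⟩ := hw a
      rw [hc, Pi.smul_apply, Pi.single_eq_of_ne' hab, smul_zero]
  rw [Finset.sum_apply, Finset.sum_congr rfl fun a _ => hterm a, ← Finset.sum_filter,
    Finset.sum_const, nsmul_eq_self_of_add_self hidem (Finset.card_ne_zero.2 ⟨b, by simp⟩)]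

theorem existsUnique_fiberwise_expansion (hidem : ∀ a : K, a + a = a) (hs : Surjective s)
    (hw : ∀ a, ∃ c ≠ 0, w a = Pi.single (s a) c) (hws : ∀ a b, s a = s b → w a = w b)
    (x : ι → K) : ∃! f : α → K, (∀ a b, s a = s b → f a = f b) ∧ x = ∑ a, f a • w a := by
  choose c hc0 hc using hw
  have hcoef : ∀ a, w a (s a) = c a := fun a => by rw [hc, Pi.single_eq_same]
  have hsum := fun f => sum_smul_apply_of_fiberwise_const hidem (fun a => ⟨c a, hc a⟩) hws (f := f)
  have hcs : ∀ a b, s a = s b → c a = c b := fun a b hab => by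
    rw [← hcoef, ← hcoef, hws a b hab, hab]
  have hquot : ∀ a b, s a = s b → x (s a) / c a = x (s b) / c b := fun a b hab => by
    rw [hab, hcs a b hab]
  refine ⟨fun a => x (s a) / c a, ⟨hquot, funext fun i => ?_⟩, ?_⟩
  · obtain ⟨b, rfl⟩ := hs i
    rw [hsum _ hquot, hcoef, div_mul_cancel₀ _ (hc0 b)]
  · rintro f ⟨hf, hx⟩
    funext b
    rw [eq_div_iff (hc0 b), ← hcoef, ← hsum f hf, ← hx]

end FiberwiseExpansion

theorem Subgroup.forall_mul_mem_eq_iff {G ι β : Type*} [Group G] {H : Subgroup G} {s : G → ι}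
    (hs : ∀ g g', s g = s g' ↔ g⁻¹ * g' ∈ H) (f : G → β) :
    (∀ g, ∀ h ∈ H, f (g * h) = f g) ↔ ∀ g g', s g = s g' → f g = f g' := by
  refine ⟨fun hf g g' hgg' => ?_, fun hf g h hh => hf _ _ ((hs _ _).2 ?_)⟩
  · simpa using (hf g _ ((hs g g').1 hgg')).symm
  · simpa [mul_assoc] using H.inv_mem hh

/-- Let `V = K^n` be an indecomposable representation of a finite group `G`
over an idempotent semifield `K`, and let `H` be the stabilizer of the basis
line spanned by the basis vector `v = e_{i₀}`.  Then `H` fixes `v`, and every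
element of `V` is uniquely of the form `∑_{g ∈ G} a_g (g • v)` with the
coefficients `a : G → K` constant on left cosets of `H` (equivalently,
uniquely `∑_{g ∈ S} a_g (g • v)` over coset representatives `S`). -/
theorem indecomposable_unique_coset_expansion
    (K G : Type*) [Semifield K] (hidem : ∀ a : K, a + a = a)
    [Group G] [Fintype G] (n : ℕ) (ρ : Representation K G (Fin n → K))
    (hindec : ¬ ∃ p q : Submodule K (Fin n → K),
        (∀ g : G, ∀ y ∈ p, ρ g y ∈ p) ∧ (∀ g : G, ∀ y ∈ q, ρ g y ∈ q) ∧
        p ≠ ⊥ ∧ q ≠ ⊥ ∧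
        ∀ z : Fin n → K, ∃! w : p × q, (w.1 : Fin n → K) + (w.2 : Fin n → K) = z)
    (i₀ : Fin n) (H : Subgroup G)
    (hH : ∀ g : G, g ∈ H ↔
        Submodule.map (ρ g) (Submodule.span K {Pi.single i₀ (1 : K)}) =
          Submodule.span K {Pi.single i₀ (1 : K)}) :
    (∀ h ∈ H, ρ h (Pi.single i₀ (1 : K)) = Pi.single i₀ (1 : K)) ∧
    (∀ x : Fin n → K, ∃! a : G → K,
        (∀ g : G, ∀ h ∈ H, a (g * h) = a g) ∧
        x = ∑ g : G, a g • ρ g (Pi.single i₀ (1 : K))) := by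
  have := subsingleton_addUnits_of_add_self hidem
  obtain ⟨σ, hσ⟩ := exists_permutesBasisLines ρ
  have hfix : ∀ h ∈ H, ρ h (Pi.single i₀ 1) = Pi.single i₀ 1 := fun h hh =>
    ρ.apply_eq_self_of_apply_mem_span_singleton (Pi.single_ne_zero_iff.2 one_ne_zero)
      ((hH h).1 hh ▸ Submodule.mem_map_of_mem (Submodule.mem_span_singleton_self _))
  have hcoset : ∀ g g', σ g i₀ = σ g' i₀ ↔ g⁻¹ * g' ∈ H := fun g g' => by
    rw [hH, hσ.map_eq_iff, hσ.mul_apply, hσ.inv_apply_eq_iff, eq_comm]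
  have horbit : ∀ g g', σ g i₀ = σ g' i₀ → ρ g (Pi.single i₀ 1) = ρ g' (Pi.single i₀ 1) :=
    fun g g' hgg' => by
      rw [← mul_inv_cancel_left g g', map_mul, Module.End.mul_apply, hfix _ ((hcoset g g').1 hgg')]
  refine ⟨hfix, fun x => ?_⟩
  simpa only [Subgroup.forall_mul_mem_eq_iff hcoset] using
    existsUnique_fiberwise_expansion hidem (hσ.surjective_of_not_isDecomposable hindec i₀)
      (fun g => hσ.exists_apply_single_eq g i₀) horbit x
end

section
/- Let G be a finite group, K an idempotent semifield, V an indecomposable representation of G over K, and W any representation. Let H ≤ G be the stabilizer subgroup associated to V (the stabilizer of a basis line). Then there is a bijection between homomorphisms of representations V → W and H-invariant elements of W (elements w ∈ W with h·w = w for all h ∈ H). -/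
/-!
An idempotent semifield is zero-sum-free, and over a zero-sum-free semifield an invertible matrix
is monomial: every `ρ g` permutes the coordinate lines `K eᵢ`. A `G`-stable set of lines and its
complement split `K^n`, so by indecomposability `G` is transitive on the lines. An element of `G`
mapping the line of `v = e_{i₀}` to itself scales `v` by a root of unity `c`, and `c = 1` because
`c (1 + c + ⋯ + c^{k-1}) = 1 + c + ⋯ + c^{k-1} ≠ 0`; hence `H` is the stabiliser of `v`.
Choosing `gᵢ` with `ρ gᵢ v ∈ K eᵢ`, the vectors `ρ gᵢ v` form a basis that `G` permutes like the
cosets `gᵢ H`, so `V ≅ K[G/H]`, and an intertwiner out of `V` is freely determined by the image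
of `v`, which can be any `H`-invariant vector.
-/

theorem Pi.single_eq_smul_single_one {ι K : Type*} [Semiring K] [DecidableEq ι] (i : ι) (c : K) :
    Pi.single i c = c • Pi.single i (1 : K) := by
  rw [← Pi.single_smul', smul_eq_mul, mul_one]

theorem LinearMap.apply_eq_sum_smul_single {K ι M : Type*} [Semiring K] [Fintype ι]
    [DecidableEq ι] [AddCommMonoid M] [Module K M] (f : (ι → K) →ₗ[K] M) (x : ι → K) :
    f x = ∑ i, x i • f (Pi.single i 1) := by
  conv_lhs => rw [← Finset.univ_sum_single x]
  simp [map_sum, Pi.single_eq_smul_single_one _ (x _)]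

def ZeroSumFree (M : Type*) [AddZeroClass M] : Prop :=
  ∀ a b : M, a + b = 0 → a = 0

theorem ZeroSumFree.of_add_self {M : Type*} [AddMonoid M] (h : ∀ a : M, a + a = a) :
    ZeroSumFree M := fun a b hab =>
  calc a = a + (a + b) := by rw [hab, add_zero]
    _ = a + b := by rw [← add_assoc, h]
    _ = 0 := hab

namespace ZeroSumFree

theorem eq_zero_of_sum_eq_zero {M ι : Type*} [AddCommMonoid M] (hM : ZeroSumFree M)
    {s : Finset ι} {f : ι → M} (h : ∑ i ∈ s, f i = 0) {i : ι} (hi : i ∈ s) : f i = 0 := by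
  classical
  exact hM _ _ ((Finset.add_sum_erase s f hi).trans h)

theorem eq_one_of_pow_eq_one {K : Type*} [DivisionSemiring K] (hK : ZeroSumFree K) {c : K}
    {n : ℕ} (hn : n ≠ 0) (h : c ^ n = 1) : c = 1 := by
  obtain ⟨m, rfl⟩ := Nat.exists_eq_succ_of_ne_zero hn
  set s := ∑ i ∈ Finset.range (m + 1), c ^ i
  have hs : s ≠ 0 := fun hs => one_ne_zero (α := K) <| by
    simpa using hK.eq_zero_of_sum_eq_zero hs (Finset.mem_range.2 m.succ_pos)
  -- multiplying the geometric sum by `c` permutes its terms cyclically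
  have hcs : c * s = 1 * s := by
    simp only [s, one_mul, Finset.mul_sum, ← pow_succ']
    rw [Finset.sum_range_succ, h, Finset.sum_range_succ' (fun i => c ^ i), pow_zero]
  exact mul_right_cancel₀ hs hcs

theorem exists_apply_single_eq_single {K ι : Type*} [DivisionSemiring K] [Fintype ι]
    [DecidableEq ι] (hK : ZeroSumFree K) (f : (ι → K) ≃ₗ[K] (ι → K)) (j : ι) :
    ∃ i c, c ≠ 0 ∧ f (Pi.single j 1) = Pi.single i c := by
  set a := f (Pi.single j 1)
  have hexp (k : ι) : ∑ i, a i * f.symm (Pi.single i 1) k = (Pi.single j 1 : ι → K) k := by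
    simpa [a] using (congrFun (f.symm.toLinearMap.apply_eq_sum_smul_single a) k).symm
  obtain ⟨i, -, hi⟩ := Finset.exists_ne_zero_of_sum_ne_zero
    (by simp [hexp j] : ∑ i, a i * f.symm (Pi.single i 1) j ≠ 0)
  obtain ⟨hai, hbi⟩ := mul_ne_zero_iff.1 hi
  -- a second nonzero entry of `f.symm (Pi.single i 1)` would survive in `hexp`: sums do not cancel
  obtain ⟨b, hb0, hb⟩ : ∃ b, b ≠ 0 ∧ f.symm (Pi.single i 1) = Pi.single j b := by
    refine ⟨_, hbi, funext fun k => ?_⟩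
    by_cases hk : k = j
    · subst hk; simp
    · have := hK.eq_zero_of_sum_eq_zero ((hexp k).trans (by simp [hk])) (Finset.mem_univ i)
      simpa [hk] using (mul_eq_zero.1 this).resolve_left hai
  have hia : Pi.single i 1 = b • a := by
    rw [← f.apply_symm_apply (Pi.single i 1), hb, Pi.single_eq_smul_single_one j, map_smul]
  refine ⟨i, b⁻¹, inv_ne_zero hb0, ?_⟩
  rw [Pi.single_eq_smul_single_one i, hia, inv_smul_smul₀ hb0]

end ZeroSumFree

namespace Pi

variable {ι : Type*}

def supported (K : Type*) [Semiring K] (S : Set ι) : Submodule K (ι → K) :=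
  Submodule.pi Sᶜ fun _ => ⊥

variable {K : Type*} [Semiring K]

theorem mem_supported {S : Set ι} {x : ι → K} : x ∈ supported K S ↔ ∀ i ∉ S, x i = 0 := by
  simp [supported, Submodule.mem_pi]

theorem single_mem_supported [DecidableEq ι] {S : Set ι} {i : ι} (hi : i ∈ S) (c : K) :
    Pi.single i c ∈ supported K S :=
  mem_supported.2 fun _ hj => Pi.single_eq_of_ne' (M := fun _ => K) (ne_of_mem_of_not_mem hi hj) c

theorem existsUnique_add_supported_compl (S : Set ι) (z : ι → K) :
    ∃! w : supported K S × supported K Sᶜ, (w.1 : ι → K) + w.2 = z := by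
  classical
  refine ⟨(⟨S.indicator z, mem_supported.2 fun i hi => Set.indicator_of_notMem hi z⟩,
    ⟨Sᶜ.indicator z, mem_supported.2 fun i hi => Set.indicator_of_notMem hi z⟩),
    S.indicator_self_add_compl z, ?_⟩
  rintro ⟨⟨a, ha⟩, ⟨b, hb⟩⟩ rfl
  have ha := mem_supported.1 ha
  have hb := mem_supported.1 hb
  refine Prod.ext (Subtype.ext (funext fun i => ?_)) (Subtype.ext (funext fun i => ?_)) <;>
    by_cases hi : i ∈ S <;> simp_all

theorem apply_mem_supported [Fintype ι] [DecidableEq ι] {S : Set ι}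
    (f : (ι → K) →ₗ[K] (ι → K)) (hf : ∀ i ∈ S, f (Pi.single i 1) ∈ supported K S)
    {x : ι → K} (hx : x ∈ supported K S) : f x ∈ supported K S := by
  rw [f.apply_eq_sum_smul_single]
  refine Submodule.sum_mem _ fun i _ => ?_
  by_cases hi : i ∈ S
  · exact Submodule.smul_mem _ _ (hf i hi)
  · rw [mem_supported.1 hx i hi, zero_smul]
    exact Submodule.zero_mem _

end Pi

namespace Representation

/-- `V` is the permutation module `k[G/H]`: `g` is a transversal of `G/H` and `b i = g i • v`. -/
theorem exists_homEquiv_invariants {k G V W ι : Type*} [CommSemiring k] [Group G]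
    [AddCommMonoid V] [Module k V] [AddCommMonoid W] [Module k W] (ρ : Representation k G V)
    (η : Representation k G W) (H : Subgroup G) (v : V) (hv : ∀ h ∈ H, ρ h v = v)
    (b : Module.Basis ι k V) (g : ι → G) (hb : ∀ i, ρ (g i) v = b i)
    (hcov : ∀ x : G, ∃ i, (g i)⁻¹ * x ∈ H) :
    ∃ e : {φ : V →ₗ[k] W // ∀ (x : G) (y : V), φ (ρ x y) = η x (φ y)} ≃
        {w : W // ∀ h ∈ H, η h w = w},
      ∀ φ, (e φ : W) = φ.1 v := by
  have hρv (x : G) (i : ι) (hi : (g i)⁻¹ * x ∈ H) : ρ x v = b i :=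
    calc ρ x v = ρ (g i) (ρ ((g i)⁻¹ * x) v) := by
          rw [← Module.End.mul_apply, ← map_mul, mul_inv_cancel_left]
      _ = b i := by rw [hv _ hi, hb]
  let lift (w : {w : W // ∀ h ∈ H, η h w = w}) : V →ₗ[k] W := b.constr k fun i => η (g i) w
  have lift_comp (w) (x : G) : (lift w).comp (ρ x) = (η x).comp (lift w) := by
    refine b.ext fun j => ?_
    obtain ⟨i, hi⟩ := hcov (x * g j)
    have hx : ρ x (b j) = b i := by rw [← hb, ← Module.End.mul_apply, ← map_mul, hρv _ _ hi]
    simp only [LinearMap.comp_apply, hx, lift, b.constr_basis]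
    rw [← Module.End.mul_apply, ← map_mul, ← mul_inv_cancel_left (g i) (x * g j), map_mul,
      Module.End.mul_apply, w.2 _ hi]
  refine ⟨{ toFun := fun φ => ⟨φ.1 v, fun h hh => by rw [← φ.2, hv h hh]⟩
            invFun := fun w => ⟨lift w, fun x y => LinearMap.congr_fun (lift_comp w x) y⟩
            left_inv := fun φ => Subtype.ext (b.ext fun i => ?_)
            right_inv := fun w => Subtype.ext ?_ }, fun φ => rfl⟩
  · simp only [lift, b.constr_basis]
    rw [← hb, φ.2]
  · obtain ⟨i, hi⟩ := hcov 1
    have hvi : v = b i := by rw [← hρv 1 i hi, map_one, Module.End.one_apply]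
    simp [lift, hvi, b.constr_basis, w.2 (g i) (by simpa using hi)]

variable {K G ι : Type*} [Semifield K] [Group G]

/-- Over a semiring a splitting `V = p ⊕ q` is expressed by the uniqueness of `z = x + y`. -/
def IsIndecomposable {V : Type*} [AddCommMonoid V] [Module K V] (ρ : Representation K G V) :
    Prop :=
  ¬ ∃ p q : Submodule K V, (∀ g : G, ∀ y ∈ p, ρ g y ∈ p) ∧ (∀ g : G, ∀ y ∈ q, ρ g y ∈ q) ∧
    p ≠ ⊥ ∧ q ≠ ⊥ ∧ ∀ z : V, ∃! w : p × q, (w.1 : V) + (w.2 : V) = z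

variable (ρ : Representation K G (ι → K))

theorem eq_one_of_apply_eq_smul [Finite G] (hK : ZeroSumFree K) {g : G} {v : ι → K}
    (hv : v ≠ 0) {c : K} (h : ρ g v = c • v) : c = 1 := by
  have hpow (k : ℕ) : ρ (g ^ k) v = c ^ k • v := by
    induction k with
    | zero => simp
    | succ k ih =>
      rw [pow_succ', map_mul, Module.End.mul_apply, ih, map_smul, h, smul_smul, pow_succ]
  obtain ⟨i, hi⟩ := Function.ne_iff.1 hv
  refine hK.eq_one_of_pow_eq_one (orderOf_pos g).ne' ?_
  have := congrFun (hpow (orderOf g)) i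
  rw [pow_orderOf_eq_one, map_one, Module.End.one_apply, Pi.smul_apply, smul_eq_mul] at this
  exact (mul_eq_right₀ hi).1 this.symm

theorem map_span_singleton_eq_iff [Finite G] (hK : ZeroSumFree K) {v : ι → K} (hv : v ≠ 0)
    (g : G) : (K ∙ v).map (ρ g) = K ∙ v ↔ ρ g v = v := by
  rw [Submodule.map_span, Set.image_singleton]
  refine ⟨fun h => ?_, fun h => by rw [h]⟩
  obtain ⟨c, hc⟩ :=
    Submodule.mem_span_singleton.1 (h ▸ Submodule.mem_span_singleton_self (ρ g v))
  rw [← hc, ρ.eq_one_of_apply_eq_smul hK hv hc.symm, one_smul]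

variable [DecidableEq ι]

def MapsLine (g : G) (i j : ι) : Prop :=
  ∃ c : K, c ≠ 0 ∧ ρ g (Pi.single i 1) = Pi.single j c

theorem mapsLine_one (i : ι) : ρ.MapsLine 1 i i :=
  ⟨1, one_ne_zero, by simp⟩

theorem exists_mapsLine [Fintype ι] (hK : ZeroSumFree K) (g : G) (i : ι) :
    ∃ j, ρ.MapsLine g i j :=
  hK.exists_apply_single_eq_single (LinearMap.GeneralLinearGroup.toLinearEquiv (ρ.asGroupHom g)) i

variable {ρ}

theorem MapsLine.mul {g g' : G} {i j k : ι} (h : ρ.MapsLine g i j) (h' : ρ.MapsLine g' j k) :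
    ρ.MapsLine (g' * g) i k := by
  obtain ⟨c, hc, hg⟩ := h
  obtain ⟨c', hc', hg'⟩ := h'
  refine ⟨c * c', mul_ne_zero hc hc', ?_⟩
  rw [map_mul, Module.End.mul_apply, hg, Pi.single_eq_smul_single_one j, map_smul, hg',
    Pi.single_eq_smul_single_one k c', smul_smul, ← Pi.single_eq_smul_single_one]

theorem MapsLine.inv {g : G} {i j : ι} (h : ρ.MapsLine g i j) : ρ.MapsLine g⁻¹ j i := by
  obtain ⟨c, hc, hg⟩ := h
  refine ⟨c⁻¹, inv_ne_zero hc, ?_⟩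
  have hj : Pi.single j (1 : K) = c⁻¹ • ρ g (Pi.single i 1) := by
    rw [hg, Pi.single_eq_smul_single_one j c, inv_smul_smul₀ hc]
  rw [hj, map_smul, inv_self_apply, ← Pi.single_eq_smul_single_one]

theorem MapsLine.apply_eq_self [Finite G] (hK : ZeroSumFree K) {g : G} {i : ι}
    (h : ρ.MapsLine g i i) : ρ g (Pi.single i 1) = Pi.single i 1 := by
  obtain ⟨c, -, hg⟩ := h
  rw [Pi.single_eq_smul_single_one i c] at hg
  rw [hg, ρ.eq_one_of_apply_eq_smul hK (by simp) hg, one_smul]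

theorem IsIndecomposable.eq_univ [Fintype ι] (hρ : ρ.IsIndecomposable) {S : Set ι}
    (hS : ∀ g, ∀ i ∈ S, ρ g (Pi.single i 1) ∈ Pi.supported K S)
    (hSc : ∀ g, ∀ i ∉ S, ρ g (Pi.single i 1) ∈ Pi.supported K Sᶜ) (hne : S.Nonempty) :
    S = Set.univ := by
  by_contra hS'
  obtain ⟨j, hj⟩ := (Set.ne_univ_iff_exists_notMem S).1 hS'
  obtain ⟨i, hi⟩ := hne
  refine hρ ⟨Pi.supported K S, Pi.supported K Sᶜ, fun g _ => Pi.apply_mem_supported (ρ g) (hS g),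
    fun g _ => Pi.apply_mem_supported (ρ g) (hSc g), ?_, ?_, Pi.existsUnique_add_supported_compl S⟩
  · exact (Submodule.ne_bot_iff _).2 ⟨_, Pi.single_mem_supported hi 1, by simp⟩
  · exact (Submodule.ne_bot_iff _).2 ⟨_, Pi.single_mem_supported (Set.mem_compl hj) 1, by simp⟩

theorem IsIndecomposable.exists_mapsLine [Fintype ι] (hK : ZeroSumFree K)
    (hρ : ρ.IsIndecomposable) (i j : ι) : ∃ g, ρ.MapsLine g i j := by
  set S := {j | ∃ g, ρ.MapsLine g i j}
  suffices S = Set.univ from Set.eq_univ_iff_forall.1 this j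
  refine hρ.eq_univ (fun g k hk => ?_) (fun g k hk => ?_) ⟨i, 1, ρ.mapsLine_one i⟩
  · obtain ⟨g₀, h₀⟩ := hk
    obtain ⟨l, hl⟩ := ρ.exists_mapsLine hK g k
    obtain ⟨c, -, hc⟩ := id hl
    rw [hc]
    exact Pi.single_mem_supported (show l ∈ S from ⟨g * g₀, h₀.mul hl⟩) c
  · obtain ⟨l, hl⟩ := ρ.exists_mapsLine hK g k
    obtain ⟨c, -, hc⟩ := id hl
    rw [hc]
    exact Pi.single_mem_supported
      (show l ∉ S from fun ⟨g₀, h₀⟩ => hk ⟨g⁻¹ * g₀, h₀.mul hl.inv⟩) c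

end Representation

/-- For an indecomposable representation `V = K^n` of a finite group `G` over
an idempotent semifield `K`, with `H` the stabilizer of the basis line
spanned by `v = e_{i₀}`, the homomorphisms of representations `V → W` are in
bijection with the `H`-invariant elements of `W`, via `φ ↦ φ(v)`. -/
theorem homs_correspond_to_invariant_elements
    (K G : Type*) [Semifield K] (hidem : ∀ a : K, a + a = a)
    [Group G] [Fintype G] (n m : ℕ)
    (ρ : Representation K G (Fin n → K)) (η : Representation K G (Fin m → K))
    (hindec : ¬ ∃ p q : Submodule K (Fin n → K),
        (∀ g : G, ∀ y ∈ p, ρ g y ∈ p) ∧ (∀ g : G, ∀ y ∈ q, ρ g y ∈ q) ∧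
        p ≠ ⊥ ∧ q ≠ ⊥ ∧
        ∀ z : Fin n → K, ∃! w : p × q, (w.1 : Fin n → K) + (w.2 : Fin n → K) = z)
    (i₀ : Fin n) (H : Subgroup G)
    (hH : ∀ g : G, g ∈ H ↔
        Submodule.map (ρ g) (Submodule.span K {Pi.single i₀ (1 : K)}) =
          Submodule.span K {Pi.single i₀ (1 : K)}) :
    ∃ e : {φ : (Fin n → K) →ₗ[K] (Fin m → K) //
              ∀ (g : G) (x : Fin n → K), φ (ρ g x) = η g (φ x)} ≃
          {w : Fin m → K // ∀ h ∈ H, η h w = w},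
      ∀ φ, (e φ : Fin m → K) = φ.1 (Pi.single i₀ (1 : K)) := by
  have hK : ZeroSumFree K := .of_add_self hidem
  have hmem (g : G) : g ∈ H ↔ ρ g (Pi.single i₀ 1) = Pi.single i₀ 1 :=
    (hH g).trans (ρ.map_span_singleton_eq_iff hK (by simp) g)
  have hρ : ρ.IsIndecomposable := hindec
  choose gs hgs using hρ.exists_mapsLine hK i₀
  choose c hc hgc using hgs
  let b := (Pi.basisFun K (Fin n)).unitsSMul fun i => Units.mk0 (c i) (hc i)
  refine ρ.exists_homEquiv_invariants η H _ (fun h hh => (hmem h).1 hh) b gs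
    (fun i => by rw [hgc, Module.Basis.unitsSMul_apply, Pi.basisFun_apply, Units.smul_mk0,
      ← Pi.single_eq_smul_single_one]) (fun x => ?_)
  obtain ⟨k, hk⟩ := ρ.exists_mapsLine hK x i₀
  have hgk : ρ.MapsLine (gs k) i₀ k := ⟨c k, hc k, hgc k⟩
  exact ⟨k, (hmem _).2 ((hk.mul hgk.inv).apply_eq_self hK)⟩
end

section
/- Let K be a semiring, G a finite group, and M a K[G]-module that is weakly reflexive as a K-module and whose K-dual M^∨ = Hom_K(M,K) is finitely generated as a K-module. Then M is isomorphic as a K[G]-module to a submodule of K[G]^n for some n. -/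
/-!
A functional `φ` on `M` extends to the `G`-equivariant map `x ↦ ∑ g, φ (g⁻¹ • x) g` into `K[G]`,
whose coefficient at `1` is `φ` again. Doing this for a finite spanning family `φ₁, …, φₙ` of the
dual gives an equivariant map `M → K[G]ⁿ` which, read off at the coefficient `1`, is
`x ↦ (φᵢ x)ᵢ`; the latter is injective because the `φᵢ` span the dual and `M` is weakly reflexive.
-/

open MonoidAlgebra

namespace Module.Dual

variable {K M : Type*} [CommSemiring K] [AddCommMonoid M] [Module K M]

theorem injective_pi_of_span_eq_top {ι : Type*} {φ : ι → Dual K M}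
    (hwr : Function.Injective (Dual.eval K M)) (hφ : Submodule.span K (Set.range φ) = ⊤) :
    Function.Injective (LinearMap.pi φ) := fun _ _ h ↦
  hwr <| LinearMap.ext_on_range hφ fun i ↦ congrFun h i

variable (G : Type*) [Group G] [Fintype G] [DistribMulAction G M] [SMulCommClass G K M]

noncomputable def toGroupAlgebra (φ : Dual K M) : M →ₗ[K] MonoidAlgebra K G :=
  ∑ g : G, lsingle g ∘ₗ φ ∘ₗ DistribSMul.toLinearMap K M g⁻¹

variable {G}

theorem toGroupAlgebra_apply (φ : Dual K M) (x : M) :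
    φ.toGroupAlgebra G x = ∑ g : G, single g (φ (g⁻¹ • x)) := by
  simp [toGroupAlgebra]

theorem coeff_toGroupAlgebra_one (φ : Dual K M) (x : M) :
    (φ.toGroupAlgebra G x).coeff 1 = φ x := by
  simp only [toGroupAlgebra_apply, coeff_sum, coeff_single, Finset.sum_apply']
  rw [Fintype.sum_eq_single 1 fun g hg ↦ Finsupp.single_eq_of_ne' hg]
  simp

theorem toGroupAlgebra_smul (φ : Dual K M) (g : G) (x : M) :
    φ.toGroupAlgebra G (g • x) = single g 1 * φ.toGroupAlgebra G x := by
  simp only [toGroupAlgebra_apply, Finset.mul_sum, single_mul_single, one_mul]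
  exact Fintype.sum_equiv (Equiv.mulLeft g⁻¹) _ _ fun h ↦ by simp [mul_smul]

end Module.Dual

/-- Let `K` be a semiring, `G` a finite group, and `M` a `K[G]`-module (a
`K`-module with a `K`-linear `G`-action) which is weakly reflexive as a
`K`-module and whose `K`-dual is finitely generated.  Then `M` embeds
`G`-equivariantly and `K`-linearly into `K[G]^n` for some `n`, where `G` acts
on `K[G]` by left multiplication. -/
theorem embeds_into_power_of_group_algebra
    (K G M : Type*) [CommSemiring K] [Group G] [Fintype G]
    [AddCommMonoid M] [Module K M] [DistribMulAction G M] [SMulCommClass G K M]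
    (hwr : Function.Injective (Module.Dual.eval K M))
    (hfg : Module.Finite K (Module.Dual K M)) :
    ∃ (n : ℕ) (f : M →ₗ[K] (Fin n → MonoidAlgebra K G)),
      Function.Injective f ∧
      ∀ (g : G) (x : M) (i : Fin n),
        f (g • x) i = MonoidAlgebra.single g (1 : K) * f x i := by
  obtain ⟨n, φ, hφ⟩ := Module.Finite.exists_fin (R := K) (M := Module.Dual K M)
  let f : M →ₗ[K] (Fin n → MonoidAlgebra K G) := LinearMap.pi fun i ↦ (φ i).toGroupAlgebra G
  have hcoeff : (fun v : Fin n → MonoidAlgebra K G ↦ fun i ↦ (v i).coeff 1) ∘ f = LinearMap.pi φ :=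
    funext fun x ↦ funext fun i ↦ (φ i).coeff_toGroupAlgebra_one x
  refine ⟨n, f, ?_, fun g x i ↦ (φ i).toGroupAlgebra_smul g x⟩
  exact Function.Injective.of_comp (hcoeff ▸ Module.Dual.injective_pi_of_span_eq_top hwr hφ)
end
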